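/- arXiv:0802.2528 — 4 statements merged into one kernel-verified Lean document; each statement's English description precedes it below -/
import Mathlib

section
/- Let C be a cycle in a 2-vertex-connected graph G, with C ≠ G. Fix an origin on C and number the vertices of C clockwise. An earring of C is a connected component of G − V(C); its clasps are the vertices of C adjacent to it. Define the arc of an earring as the clockwise path along C from its first (lowest-numbered) clasp to its last (highest-numbered) clasp. Let H be an earring whose arc has minimum length (number of edges). Then for every segment S contained in the arc of H (a subpath of C whose endpoints are clasps of earrings and whose internal vertices are clasps of no earring), the graph G − S obtained by deleting the edges and internal vertices of S is 2-vertex-connected. -/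
open SimpleGraph

/-- A graph is 2-vertex-connected: at least 3 vertices and deleting any single
vertex leaves a connected graph. -/
def Graph2Conn {V : Type*} (G : SimpleGraph V) : Prop :=
  3 ≤ Nat.card V ∧ ∀ v : V, (G.induce {w | w ≠ v}).Connected

/-- Vertices outside the cycle `C`. -/
def cycOutside {V : Type*} {G : SimpleGraph V} {o : V} (C : G.Walk o o) : Set V :=
  {x | x ∉ C.support}

/-- The graph `G - V(C)`, whose connected components are the earrings of `C`. -/
def earGraph {V : Type*} {G : SimpleGraph V} {o : V} (C : G.Walk o o) :
    SimpleGraph ↥(cycOutside C) :=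
  G.induce (cycOutside C)

/-- `x` is a clasp of the earring `K`: it lies on `C` and is adjacent to `K`. -/
def isClasp {V : Type*} {G : SimpleGraph V} {o : V} (C : G.Walk o o)
    (K : (earGraph C).ConnectedComponent) (x : V) : Prop :=
  x ∈ C.support ∧
    ∃ y : ↥(cycOutside C), (earGraph C).connectedComponentMk y = K ∧ G.Adj x ↑y

/-- Clockwise index of a vertex on the cycle `C` (the origin `o` has index 0). -/
def cidx {V : Type*} [DecidableEq V] {G : SimpleGraph V} {o : V}
    (C : G.Walk o o) (x : V) : ℕ :=
  C.support.dropLast.idxOf x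

/-- Index of the first (lowest-numbered) clasp of the earring `K`. -/
noncomputable def firstClasp {V : Type*} [DecidableEq V] {G : SimpleGraph V} {o : V}
    (C : G.Walk o o) (K : (earGraph C).ConnectedComponent) : ℕ :=
  sInf {n | ∃ x, isClasp C K x ∧ cidx C x = n}

/-- Index of the last (highest-numbered) clasp of the earring `K`. -/
noncomputable def lastClasp {V : Type*} [DecidableEq V] {G : SimpleGraph V} {o : V}
    (C : G.Walk o o) (K : (earGraph C).ConnectedComponent) : ℕ :=
  sSup {n | ∃ x, isClasp C K x ∧ cidx C x = n}

/-- Length (number of edges) of the arc of the earring `K`. -/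
noncomputable def arcLen {V : Type*} [DecidableEq V] {G : SimpleGraph V} {o : V}
    (C : G.Walk o o) (K : (earGraph C).ConnectedComponent) : ℕ :=
  lastClasp C K - firstClasp C K

/-- `x` is an anchor: a clasp of some earring. -/
def isAnchor {V : Type*} {G : SimpleGraph V} {o : V} (C : G.Walk o o) (x : V) : Prop :=
  ∃ K, isClasp C K x

/-!
Let `W` be the segment, oriented to run clockwise from `p` to `q`, and `R` the complementary arc
of `C` from `q` back to `p`; all of `R` survives in `G - W`, and every anchor lies on `R`. A vertex
off `C` reaches `C` in `G` avoiding any given vertex `v`, and the first vertex of `C` it meets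
is an anchor reached through an earring, hence on `R`. So `G - W - v` is connected as soon as
the two pieces of `R - v` are joined, i.e. some earring has clasps on both sides of `v` on `R`.
If `v` lies between `q` and the last clasp of `H`, an earring with a clasp at `q` does it: either its last
clasp lies beyond that of `H`, or, by minimality of the arc of `H`, its first clasp precedes
that of `H`. Symmetrically near `p`, and in between `H` itself does it. If `W` passes through
the origin, the arc of `H` is all of `C` and `H` has clasps at `q` and `p`.
-/

namespace SimpleGraph

variable {V : Type*} {G : SimpleGraph V}

def ReachIn (G : SimpleGraph V) (s : Set V) (x y : V) : Prop :=
  ∃ W : G.Walk x y, ∀ u ∈ W.support, u ∈ s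

namespace ReachIn

variable {s : Set V} {x y z : V}

lemma right_mem (h : G.ReachIn s x y) : y ∈ s :=
  h.elim fun W hW => hW y W.end_mem_support

lemma refl (hx : x ∈ s) : G.ReachIn s x x :=
  ⟨.nil, by simpa using hx⟩

lemma symm (h : G.ReachIn s x y) : G.ReachIn s y x :=
  h.elim fun W hW => ⟨W.reverse, by simpa using hW⟩

lemma trans (h : G.ReachIn s x y) (h' : G.ReachIn s y z) : G.ReachIn s x z := by
  obtain ⟨W, hW⟩ := h
  obtain ⟨W', hW'⟩ := h'
  refine ⟨W.append W', fun u hu => ?_⟩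
  rcases (Walk.mem_support_append_iff _ _).mp hu with hu | hu
  exacts [hW u hu, hW' u hu]

lemma of_adj (h : G.Adj x y) (hx : x ∈ s) (hy : y ∈ s) : G.ReachIn s x y :=
  ⟨h.toWalk, by simp [hx, hy]⟩

lemma of_chain (c : ℕ → V) {i j : ℕ} (hij : i ≤ j)
    (hadj : ∀ k, i ≤ k → k < j → G.Adj (c k) (c (k + 1)))
    (hs : ∀ k, i ≤ k → k ≤ j → c k ∈ s) : G.ReachIn s (c i) (c j) := by
  induction j, hij using Nat.le_induction with
  | base => exact refl (hs i le_rfl le_rfl)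
  | succ j hij ih =>
    refine (ih (fun k h₁ h₂ => hadj k h₁ (by omega)) (fun k h₁ h₂ => hs k h₁ (by omega))).trans ?_
    exact of_adj (hadj j hij (by omega)) (hs j hij (by omega)) (hs (j + 1) (by omega) le_rfl)

end ReachIn

lemma induce_connected_of_reachIn {s : Set V} {u : V} (hu : u ∈ s)
    (h : ∀ y ∈ s, G.ReachIn s u y) : (G.induce s).Connected :=
  induce_connected_of_patches u hu fun hy =>
    let ⟨W, hW⟩ := h _ hy
    ⟨_, hW, W.start_mem_support, W.end_mem_support,
      W.connected_induce_support.preconnected _ _⟩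

lemma induce_connected_of_reachIn_hubs {s : Set V} {a b : V}
    (hab : a ∈ s → b ∈ s → G.ReachIn s a b)
    (h : ∀ x ∈ s, G.ReachIn s x a ∨ G.ReachIn s x b) (hne : a ∈ s ∨ b ∈ s) :
    (G.induce s).Connected := by
  by_cases ha : a ∈ s
  · refine induce_connected_of_reachIn ha fun y hy => ?_
    rcases h y hy with hya | hyb
    exacts [hya.symm, (hab ha hyb.right_mem).trans hyb.symm]
  · refine induce_connected_of_reachIn (hne.resolve_left ha) fun y hy => ?_
    exact ((h y hy).resolve_left fun hya => ha hya.right_mem).symm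

lemma connected_induce_induce_ne {s : Set V} {v : s} (h : (G.induce (s \ {(v : V)})).Connected) :
    ((G.induce s).induce {w | w ≠ v}).Connected :=
  h.map (G := G.induce (s \ {(v : V)}))
    ⟨fun x => ⟨⟨x, x.2.1⟩, fun hx => x.2.2 (congrArg Subtype.val hx)⟩, fun h => h⟩
    fun ⟨⟨x, hx⟩, hxv⟩ => ⟨⟨x, hx, fun h => hxv (Subtype.ext h)⟩, rfl⟩

end SimpleGraph

lemma three_le_natCard {α : Type*} [Finite α] {a b c : α} (hab : a ≠ b) (hac : a ≠ c)
    (hbc : b ≠ c) : 3 ≤ Nat.card α := by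
  have := Set.ncard_le_card ({a, b, c} : Set α)
  rwa [Set.ncard_eq_three.mpr ⟨a, b, c, hab, hac, hbc, rfl⟩] at this

lemma Graph2Conn.exists_walk_avoiding {V : Type*} {G : SimpleGraph V} (hG : Graph2Conn G)
    {v x y : V} (hx : x ≠ v) (hy : y ≠ v) : ∃ W : G.Walk x y, v ∉ W.support := by
  obtain ⟨W⟩ := (hG.2 v).preconnected ⟨x, hx⟩ ⟨y, hy⟩
  refine ⟨W.map (Embedding.induce _).toHom, fun hv => ?_⟩
  obtain ⟨u, -, hu⟩ := List.mem_map.mp (W.support_map (Embedding.induce _).toHom ▸ hv)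
  exact u.2 hu

lemma Nat.mod_eq_mod_iff_of_lt_two_mul {n i j : ℕ} (hi : i < 2 * n) (hj : j < 2 * n) :
    i % n = j % n ↔ i = j ∨ i = j + n ∨ j = i + n := by
  have key : ∀ k < 2 * n, k % n = k ∧ k < n ∨ k % n = k - n ∧ n ≤ k := fun k hk => by
    rcases lt_or_ge k n with h | h
    · exact Or.inl ⟨Nat.mod_eq_of_lt h, h⟩
    · exact Or.inr ⟨by rw [Nat.mod_eq_sub_mod h, Nat.mod_eq_of_lt (by omega)], h⟩
  rcases key i hi with ⟨h₁, h₁'⟩ | ⟨h₁, h₁'⟩ <;> rcases key j hj with ⟨h₂, h₂'⟩ | ⟨h₂, h₂'⟩ <;>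
    omega

section CycleVert

variable {V : Type*} {G : SimpleGraph V} {o : V} {C : G.Walk o o}

def cycleVert (C : G.Walk o o) (i : ℕ) : V := C.getVert (i % C.length)

lemma cycleVert_mod_add (i k : ℕ) : cycleVert C (i % C.length + k) = cycleVert C (i + k) := by
  simp [cycleVert, Nat.mod_add_mod]

lemma cycleVert_add_length (i : ℕ) : cycleVert C (i + C.length) = cycleVert C i := by
  simp [cycleVert]

lemma cycleVert_mem_support (i : ℕ) : cycleVert C i ∈ C.support :=
  C.getVert_mem_support _

lemma getVert_eq_cycleVert {i : ℕ} (hi : i ≤ C.length) : C.getVert i = cycleVert C i := by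
  rcases hi.lt_or_eq with hi | rfl
  · rw [cycleVert, Nat.mod_eq_of_lt hi]
  · simp [cycleVert]

lemma adj_cycleVert_succ (hC : C.IsCycle) (i : ℕ) :
    G.Adj (cycleVert C i) (cycleVert C (i + 1)) := by
  have hn : 0 < C.length := by have := hC.three_le_length; omega
  rw [← cycleVert_mod_add, ← getVert_eq_cycleVert (Nat.mod_lt _ hn)]
  exact C.adj_getVert_succ (Nat.mod_lt _ hn)

lemma exists_cycleVert_of_mem_edges {x y : V} (he : s(x, y) ∈ C.edges) :
    ∃ i, x = cycleVert C i ∧ y = cycleVert C (i + 1) ∨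
      y = cycleVert C i ∧ x = cycleVert C (i + 1) := by
  obtain ⟨i, hi, he⟩ := (C.mk_mem_edges_iff_exists).mp he
  rw [getVert_eq_cycleVert hi.le, getVert_eq_cycleVert hi] at he
  exact ⟨i, by rcases Sym2.eq_iff.mp he with ⟨h₁, h₂⟩ | ⟨h₁, h₂⟩ <;> simp [h₁, h₂]⟩

lemma mem_support_dropLast (hC : C.IsCycle) {x : V} (hx : x ∈ C.support) :
    x ∈ C.support.dropLast := by
  cases C with
  | nil => exact absurd hC Walk.not_isCycle_nil
  | cons h W =>
    rw [Walk.support_cons, List.dropLast_cons_of_ne_nil W.support_ne_nil]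
    rw [Walk.support_cons, ← W.dropLast_support_concat] at hx
    simp only [List.mem_cons, List.mem_append] at hx ⊢
    tauto

end CycleVert

section CycleIndex

variable {V : Type*} [DecidableEq V] {G : SimpleGraph V} {o : V} {C : G.Walk o o}

lemma cidx_eq_idxOf (hC : C.IsCycle) {x : V} (hx : x ∈ C.support) :
    cidx C x = C.support.idxOf x := by
  conv_rhs => rw [← C.dropLast_support_concat]
  rw [List.idxOf_append_of_mem (mem_support_dropLast hC hx), cidx]

lemma getVert_cidx (hC : C.IsCycle) {x : V} (hx : x ∈ C.support) : C.getVert (cidx C x) = x := by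
  rw [cidx_eq_idxOf hC hx]
  exact C.getVert_support_idxOf hx

lemma cidx_lt (hC : C.IsCycle) {x : V} (hx : x ∈ C.support) : cidx C x < C.length := by
  have := List.idxOf_lt_length_of_mem (mem_support_dropLast hC hx)
  simpa [cidx, C.length_support] using this

lemma cidx_getVert (hC : C.IsCycle) {i : ℕ} (hi : i < C.length) : cidx C (C.getVert i) = i := by
  have := cidx_lt hC (C.getVert_mem_support i)
  exact hC.getVert_injOn' (by simp only [Set.mem_ofPred_eq]; omega)
    (by simp only [Set.mem_ofPred_eq]; omega) (getVert_cidx hC (C.getVert_mem_support i))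

lemma cycleVert_cidx (hC : C.IsCycle) {x : V} (hx : x ∈ C.support) :
    cycleVert C (cidx C x) = x := by
  rw [← getVert_eq_cycleVert (cidx_lt hC hx).le, getVert_cidx hC hx]

lemma cidx_cycleVert (hC : C.IsCycle) (i : ℕ) : cidx C (cycleVert C i) = i % C.length :=
  cidx_getVert hC (Nat.mod_lt _ (by have := hC.three_le_length; omega))

lemma cycleVert_eq_cycleVert_iff (hC : C.IsCycle) {i j : ℕ} :
    cycleVert C i = cycleVert C j ↔ i % C.length = j % C.length := by
  refine ⟨fun h => ?_, fun h => by rw [cycleVert, h, cycleVert]⟩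
  rw [← cidx_cycleVert hC, h, cidx_cycleVert hC]

lemma cycleVert_eq_cycleVert_iff_of_lt (hC : C.IsCycle) {i j : ℕ} (hi : i < 2 * C.length)
    (hj : j < 2 * C.length) :
    cycleVert C i = cycleVert C j ↔ i = j ∨ i = j + C.length ∨ j = i + C.length := by
  rw [cycleVert_eq_cycleVert_iff hC, Nat.mod_eq_mod_iff_of_lt_two_mul hi hj]

lemma eq_cycleVert_cidx_succ_of_mem_edges (hC : C.IsCycle) {x y : V} (he : s(x, y) ∈ C.edges) :
    y = cycleVert C (cidx C x + 1) ∨ x = cycleVert C (cidx C y + 1) := by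
  obtain ⟨i, ⟨rfl, rfl⟩ | ⟨rfl, rfl⟩⟩ := exists_cycleVert_of_mem_edges he
  all_goals simp [cidx_cycleVert hC, cycleVert_mod_add]

lemma eq_of_cycleVert_cidx_succ_eq (hC : C.IsCycle) {x y : V} (hx : x ∈ C.support)
    (hy : y ∈ C.support) (h : cycleVert C (cidx C x + 1) = cycleVert C (cidx C y + 1)) :
    x = y := by
  have := cidx_lt hC hx
  have := cidx_lt hC hy
  rw [cycleVert_eq_cycleVert_iff_of_lt hC (by omega) (by omega)] at h
  rw [← cycleVert_cidx hC hx, ← cycleVert_cidx hC hy, show cidx C x = cidx C y by omega]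

end CycleIndex

section Clockwise

variable {V : Type*} [DecidableEq V] {G : SimpleGraph V} {o : V} {C : G.Walk o o} {u w : V}

def IsClockwise (C : G.Walk o o) {u w : V} (W : G.Walk u w) : Prop :=
  ∀ j ≤ W.length, W.getVert j = cycleVert C (cidx C u + j)

lemma isClockwise_of_forall_succ (hC : C.IsCycle) {W : G.Walk u w} (hu : u ∈ C.support)
    (h : ∀ j < W.length, W.getVert (j + 1) = cycleVert C (cidx C (W.getVert j) + 1)) :
    IsClockwise C W := by
  intro j hj
  induction j with
  | zero => simp [cycleVert_cidx hC hu]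
  | succ j ih => rw [h j hj, ih (by omega), cidx_cycleVert hC, cycleVert_mod_add, add_assoc]

/-- A path along the cycle cannot turn back, since it would revisit a vertex. -/
lemma isClockwise_or_isClockwise_reverse (hC : C.IsCycle) {W : G.Walk u w} (hW : W.IsPath)
    (hE : ∀ e ∈ W.edges, e ∈ C.edges) (hpos : 0 < W.length) :
    IsClockwise C W ∨ IsClockwise C W.reverse := by
  have hedge : ∀ j < W.length, s(W.getVert j, W.getVert (j + 1)) ∈ C.edges := fun j hj =>
    hE _ ((W.mk_mem_edges_iff_exists).mpr ⟨j, hj, rfl⟩)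
  have hmem : ∀ j, W.getVert j ∈ C.support := by
    intro j
    rcases lt_or_ge j W.length with hj | hj
    · exact C.fst_mem_support_of_mem_edges (hedge j hj)
    · have := C.snd_mem_support_of_mem_edges (hedge (W.length - 1) (by omega))
      rwa [Nat.sub_add_cancel hpos, W.getVert_length, ← W.getVert_of_length_le hj] at this
  have hne : ∀ j, j + 2 ≤ W.length → W.getVert (j + 2) ≠ W.getVert j := fun j hj h => by
    have := hW.getVert_injOn (by simp only [Set.mem_ofPred_eq]; omega)
      (by simp only [Set.mem_ofPred_eq]; omega) h
    omega
  have hstep := fun j hj => eq_cycleVert_cidx_succ_of_mem_edges hC (hedge j hj)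
  rcases hstep 0 hpos with h0 | h0
  · refine Or.inl (isClockwise_of_forall_succ hC (W.getVert_zero ▸ hmem 0) fun j hj => ?_)
    induction j with
    | zero => exact h0
    | succ j ih =>
      refine (hstep (j + 1) hj).resolve_right fun h => hne j (by omega) ?_
      exact (eq_of_cycleVert_cidx_succ_eq hC (hmem _) (hmem _) ((ih (by omega)).symm.trans h)).symm
  · have hback : ∀ j < W.length,
        W.getVert j = cycleVert C (cidx C (W.getVert (j + 1)) + 1) := by
      intro j hj
      induction j with
      | zero => exact h0
      | succ j ih =>
        exact (hstep (j + 1) hj).resolve_left fun h =>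
          hne j (by omega) (h.trans (ih (by omega)).symm)
    refine Or.inr (isClockwise_of_forall_succ hC (W.getVert_length ▸ hmem _) fun j hj => ?_)
    rw [Walk.length_reverse] at hj
    rw [W.getVert_reverse, W.getVert_reverse, hback _ (by omega),
      show W.length - (j + 1) + 1 = W.length - j by omega]

namespace IsClockwise

variable {W : G.Walk u w}

lemma mem_support_iff (hW : IsClockwise C W) {x : V} :
    x ∈ W.support ↔ ∃ j ≤ W.length, x = cycleVert C (cidx C u + j) := by
  rw [Walk.mem_support_iff_exists_getVert]
  constructor
  · rintro ⟨j, rfl, hj⟩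
    exact ⟨j, hj, hW j hj⟩
  · rintro ⟨j, hj, rfl⟩
    exact ⟨j, hW j hj, hj⟩

lemma cycleVert_mem_support (hW : IsClockwise C W) {j : ℕ} (hj : j ≤ W.length) :
    cycleVert C (cidx C u + j) ∈ W.support :=
  hW.mem_support_iff.mpr ⟨j, hj, rfl⟩

lemma support_subset (hW : IsClockwise C W) {x : V} (hx : x ∈ W.support) : x ∈ C.support := by
  obtain ⟨j, -, rfl⟩ := hW.mem_support_iff.mp hx
  exact _root_.cycleVert_mem_support _

lemma cycleVert_length (hW : IsClockwise C W) : cycleVert C (cidx C u + W.length) = w := by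
  rw [← hW _ le_rfl, W.getVert_length]

lemma length_lt (hW : IsClockwise C W) (hC : C.IsCycle) (hP : W.IsPath) :
    W.length < C.length := by
  by_contra! h
  have h₀ : W.getVert C.length = W.getVert 0 := by
    rw [hW _ h, hW _ (Nat.zero_le _), add_zero, cycleVert_add_length]
  have := hP.getVert_injOn (by simp only [Set.mem_ofPred_eq]; omega)
    (by simp only [Set.mem_ofPred_eq]; omega) h₀
  have := hC.three_le_length
  omega

lemma edge_endpoints_mem_support (hW : IsClockwise C W) :
    ∀ e ∈ {e | e ∈ W.edges}, ∀ x ∈ e, x ∈ C.support :=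
  fun _ he _ hx => hW.support_subset (Walk.mem_support_of_mem_edges he hx)

lemma mem_support_of_cidx (hW : IsClockwise C W) (hC : C.IsCycle) (hP : W.IsPath)
    {x : V} (hx : x ∈ C.support) {j : ℕ} (hj : j ≤ W.length)
    (h : cidx C x = cidx C u + j ∨ cidx C x + C.length = cidx C u + j) : x ∈ W.support := by
  have := cidx_lt hC hx
  have := cidx_lt hC (hW.support_subset W.start_mem_support)
  have := hW.length_lt hC hP
  rw [← cycleVert_cidx hC hx, (cycleVert_eq_cycleVert_iff_of_lt hC (i := cidx C x)
    (j := cidx C u + j) (by omega) (by omega)).mpr (by omega)]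
  exact hW.cycleVert_mem_support hj

lemma cidx_end (hW : IsClockwise C W) (hC : C.IsCycle) (hP : W.IsPath) :
    cidx C w = cidx C u + W.length ∨ cidx C w + C.length = cidx C u + W.length := by
  have hq := hW.support_subset W.end_mem_support
  have := cidx_lt hC hq
  have := cidx_lt hC (hW.support_subset W.start_mem_support)
  have := hW.length_lt hC hP
  have h := (cycleVert_cidx hC hq).trans hW.cycleVert_length.symm
  rw [cycleVert_eq_cycleVert_iff_of_lt hC (by omega) (by omega)] at h
  omega

end IsClockwise

end Clockwise

section Earring

variable {V : Type*} {G : SimpleGraph V} {o : V} {C : G.Walk o o}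

lemma isClasp_of_adj {x z : V} (hx : x ∉ C.support) (hz : z ∈ C.support) (h : G.Adj z x) :
    isClasp C ((earGraph C).connectedComponentMk ⟨x, hx⟩) z :=
  ⟨hz, ⟨x, hx⟩, rfl, h⟩

variable {E : Set (Sym2 V)} {T : Set V}

lemma deleteEdges_adj_of_not_mem_support (hE : ∀ e ∈ E, ∀ u ∈ e, u ∈ C.support) {x y : V}
    (h : G.Adj x y) (hxy : x ∉ C.support ∨ y ∉ C.support) : (G.deleteEdges E).Adj x y := by
  refine (deleteEdges_adj).mpr ⟨h, fun he => ?_⟩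
  rcases hxy with hx | hy
  exacts [hx (hE _ he x (Sym2.mem_mk_left _ _)), hy (hE _ he y (Sym2.mem_mk_right _ _))]

/-- The first vertex of `C` on a walk leaving an earring is a clasp of that earring. -/
lemma exists_isClasp_reachIn (hE : ∀ e ∈ E, ∀ u ∈ e, u ∈ C.support) {x w : V}
    (W : G.Walk x w) (hx : x ∉ C.support) (hw : w ∈ C.support)
    (hT : ∀ u ∈ W.support, u ∉ C.support ∨ isAnchor C u → u ∈ T) :
    ∃ z, isClasp C ((earGraph C).connectedComponentMk ⟨x, hx⟩) z ∧
      (G.deleteEdges E).ReachIn T x z := by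
  induction W with
  | nil => exact absurd hw hx
  | @cons x y w h W ih =>
    have hxT := hT x (by simp) (.inl hx)
    have hadj := deleteEdges_adj_of_not_mem_support hE h (.inl hx)
    by_cases hy : y ∈ C.support
    · have hcl := isClasp_of_adj hx hy h.symm
      exact ⟨y, hcl, .of_adj hadj hxT (hT y (by simp) (.inr ⟨_, hcl⟩))⟩
    · obtain ⟨z, hz, hr⟩ := ih hy hw fun u hu => hT u (by simp [hu])
      have hcomp : (earGraph C).connectedComponentMk ⟨x, hx⟩ =
          (earGraph C).connectedComponentMk ⟨y, hy⟩ :=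
        ConnectedComponent.sound (Adj.reachable h)
      exact ⟨z, hcomp ▸ hz, (ReachIn.of_adj hadj hxT (hT y (by simp) (.inl hy))).trans hr⟩

lemma reachIn_of_earGraph_reachable (hE : ∀ e ∈ E, ∀ u ∈ e, u ∈ C.support)
    (hT : ∀ u, u ∉ C.support → u ∈ T) {y y' : cycOutside C} (h : (earGraph C).Reachable y y') :
    (G.deleteEdges E).ReachIn T y y' := by
  obtain ⟨W⟩ := h
  induction W with
  | @nil a => exact .refl (hT _ a.2)
  | @cons a b c h W ih =>
    exact (ReachIn.of_adj (deleteEdges_adj_of_not_mem_support hE h (.inl a.2))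
      (hT _ a.2) (hT _ b.2)).trans ih

lemma reachIn_of_isClasp (hE : ∀ e ∈ E, ∀ u ∈ e, u ∈ C.support)
    (hT : ∀ u, u ∉ C.support → u ∈ T) {K : (earGraph C).ConnectedComponent} {x z : V}
    (hx : isClasp C K x) (hz : isClasp C K z) (hxT : x ∈ T) (hzT : z ∈ T) :
    (G.deleteEdges E).ReachIn T x z := by
  obtain ⟨-, y, rfl, hxy⟩ := hx
  obtain ⟨-, y', hy', hzy'⟩ := hz
  have hxy' := deleteEdges_adj_of_not_mem_support hE hxy (.inr y.2)
  have hyz := deleteEdges_adj_of_not_mem_support hE hzy'.symm (.inl y'.2)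
  exact ((ReachIn.of_adj hxy' hxT (hT _ y.2)).trans (reachIn_of_earGraph_reachable hE hT
    (ConnectedComponent.exact hy'.symm))).trans (.of_adj hyz (hT _ y'.2) hzT)

lemma exists_isClasp (hG : Graph2Conn G) (hC : C.IsCycle) (K : (earGraph C).ConnectedComponent) :
    ∃ z, isClasp C K z := by
  induction K using ConnectedComponent.ind with | h y => ?_
  have h3 := hC.three_le_length
  have h1 : C.getVert 1 ≠ o := fun h => by
    have := (hC.getVert_endpoint_iff (by omega)).mp h
    omega
  -- any walk from `y` to `C` will do; `Graph2Conn` provides one avoiding a vertex of `C`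
  obtain ⟨W, -⟩ := hG.exists_walk_avoiding (x := y) (fun h => y.2 (h ▸ C.getVert_mem_support 1))
    h1.symm
  obtain ⟨z, hz, -⟩ := exists_isClasp_reachIn (E := ∅) (T := Set.univ) (by simp) W y.2
    C.start_mem_support fun _ _ _ => trivial
  exact ⟨z, hz⟩

variable [DecidableEq V] {K : (earGraph C).ConnectedComponent}

lemma bddAbove_cidx_clasps (hC : C.IsCycle) :
    BddAbove {n | ∃ x, isClasp C K x ∧ cidx C x = n} :=
  ⟨C.length, by rintro _ ⟨x, hx, rfl⟩; exact (cidx_lt hC hx.1).le⟩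

lemma exists_cidx_eq_firstClasp (hK : ∃ z, isClasp C K z) :
    ∃ x, isClasp C K x ∧ cidx C x = firstClasp C K :=
  let ⟨z, hz⟩ := hK
  Nat.sInf_mem (s := {n | ∃ x, isClasp C K x ∧ cidx C x = n}) ⟨_, z, hz, rfl⟩

lemma exists_cidx_eq_lastClasp (hC : C.IsCycle) (hK : ∃ z, isClasp C K z) :
    ∃ x, isClasp C K x ∧ cidx C x = lastClasp C K :=
  let ⟨z, hz⟩ := hK
  Nat.sSup_mem (s := {n | ∃ x, isClasp C K x ∧ cidx C x = n}) ⟨_, z, hz, rfl⟩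
    (bddAbove_cidx_clasps hC)

lemma firstClasp_le {x : V} (hx : isClasp C K x) : firstClasp C K ≤ cidx C x :=
  Nat.sInf_le ⟨x, hx, rfl⟩

lemma le_lastClasp (hC : C.IsCycle) {x : V} (hx : isClasp C K x) : cidx C x ≤ lastClasp C K :=
  le_csSup (bddAbove_cidx_clasps hC) ⟨x, hx, rfl⟩

lemma lastClasp_lt (hC : C.IsCycle) (hK : ∃ z, isClasp C K z) : lastClasp C K < C.length := by
  obtain ⟨x, hx, hxK⟩ := exists_cidx_eq_lastClasp hC hK
  exact hxK ▸ cidx_lt hC hx.1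

end Earring

section Segment

variable {V : Type*} {G : SimpleGraph V} {o : V} {C : G.Walk o o} {p q : V}

def keptVerts (W : G.Walk p q) : Set V := {x | x ∉ W.support ∨ x = p ∨ x = q}

lemma keptVerts_of_isAnchor {W : G.Walk p q}
    (hintA : ∀ x ∈ W.support, x ≠ p → x ≠ q → ¬ isAnchor C x) {z : V} (hz : isAnchor C z) :
    z ∈ keptVerts W := by
  by_contra h
  simp only [keptVerts, Set.mem_ofPred_eq, not_or, not_not] at h
  exact hintA z h.1 h.2.1 h.2.2 hz

lemma keptVerts_reverse (W : G.Walk p q) :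
    keptVerts W.reverse = keptVerts W := by
  ext x
  simp only [keptVerts, Walk.support_reverse, List.mem_reverse, Set.mem_ofPred_eq]
  tauto

variable [DecidableEq V] {W : G.Walk p q}

/-- Vertex `k` of the arc of `C` complementary to `W`, read clockwise from `q` (`k = 0`) to `p`
(`k = C.length - W.length`) when `W` runs clockwise. -/
def restVert (C : G.Walk o o) (W : G.Walk p q) (k : ℕ) : V :=
  cycleVert C (cidx C p + W.length + k)

lemma restVert_zero (hW : IsClockwise C W) : restVert C W 0 = q :=
  hW.cycleVert_length

lemma restVert_length_sub (hC : C.IsCycle) (hW : IsClockwise C W) (hP : W.IsPath) :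
    restVert C W (C.length - W.length) = p := by
  have := hW.length_lt hC hP
  rw [restVert, show cidx C p + W.length + (C.length - W.length) = cidx C p + C.length by omega,
    cycleVert_add_length, cycleVert_cidx hC (hW.support_subset W.start_mem_support)]

lemma restVert_injOn (hC : C.IsCycle) (hW : IsClockwise C W) (hP : W.IsPath)
    (hpos : 0 < W.length) {i j : ℕ}
    (hi : i ≤ C.length - W.length) (hj : j ≤ C.length - W.length)
    (h : restVert C W i = restVert C W j) : i = j := by
  have := hW.length_lt hC hP
  have := cidx_lt hC (hW.support_subset W.start_mem_support)
  rw [restVert, restVert, cycleVert_eq_cycleVert_iff_of_lt hC (by omega) (by omega)] at h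
  omega

lemma restVert_mem_keptVerts (hC : C.IsCycle) (hW : IsClockwise C W) (hP : W.IsPath) {k : ℕ}
    (hk : k ≤ C.length - W.length) : restVert C W k ∈ keptVerts W := by
  by_cases hkW : restVert C W k ∈ W.support
  · obtain ⟨j, hj, hkj⟩ := hW.mem_support_iff.mp hkW
    have := hW.length_lt hC hP
    have := cidx_lt hC (hW.support_subset W.start_mem_support)
    rw [restVert, cycleVert_eq_cycleVert_iff_of_lt hC (by omega) (by omega)] at hkj
    rcases (by omega : k = 0 ∨ k = C.length - W.length) with rfl | rfl
    · exact .inr (.inr (restVert_zero hW))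
    · exact .inr (.inl (restVert_length_sub hC hW hP))
  · exact .inl hkW

lemma restVert_edge_not_mem (hC : C.IsCycle) (hW : IsClockwise C W) (hP : W.IsPath) {k : ℕ}
    (hk : k < C.length - W.length) : s(restVert C W k, restVert C W (k + 1)) ∉ W.edges := by
  intro he
  obtain ⟨j, hj, hjk⟩ := (W.mk_mem_edges_iff_exists).mp he
  have := hW.length_lt hC hP
  have := cidx_lt hC (hW.support_subset W.start_mem_support)
  have := hC.three_le_length
  rw [hW j hj.le, hW (j + 1) hj, restVert, restVert] at hjk
  rcases Sym2.eq_iff.mp hjk with ⟨h₁, h₂⟩ | ⟨h₁, h₂⟩ <;>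
  · rw [cycleVert_eq_cycleVert_iff_of_lt hC (by omega) (by omega)] at h₁
    rw [cycleVert_eq_cycleVert_iff_of_lt hC (by omega) (by omega)] at h₂
    omega

lemma exists_eq_restVert (hC : C.IsCycle) (hW : IsClockwise C W) (hP : W.IsPath) {x : V}
    (hxC : x ∈ C.support) (hx : x ∈ keptVerts W) :
    ∃ k ≤ C.length - W.length, x = restVert C W k := by
  rcases hx with hx | rfl | rfl
  · have := hW.length_lt hC hP
    have := cidx_lt hC hxC
    have := cidx_lt hC (hW.support_subset W.start_mem_support)
    have h₁ : ¬ (cidx C p ≤ cidx C x ∧ cidx C x ≤ cidx C p + W.length) := fun h =>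
      hx (hW.mem_support_of_cidx hC hP hxC (j := cidx C x - cidx C p) (by omega) (.inl (by omega)))
    have h₂ : ¬ cidx C x + C.length ≤ cidx C p + W.length := fun h =>
      hx (hW.mem_support_of_cidx hC hP hxC (j := cidx C x + C.length - cidx C p) (by omega)
        (.inr (by omega)))
    rcases le_or_gt (cidx C p + W.length) (cidx C x) with h | h
    · refine ⟨cidx C x - (cidx C p + W.length), by omega, ?_⟩
      rw [restVert, show cidx C p + W.length + (cidx C x - (cidx C p + W.length)) = cidx C x
        by omega, cycleVert_cidx hC hxC]
    · refine ⟨cidx C x + C.length - (cidx C p + W.length), by omega, ?_⟩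
      rw [restVert, show cidx C p + W.length + (cidx C x + C.length - (cidx C p + W.length)) =
        cidx C x + C.length by omega, cycleVert_add_length, cycleVert_cidx hC hxC]
  · exact ⟨_, le_rfl, (restVert_length_sub hC hW hP).symm⟩
  · exact ⟨0, Nat.zero_le _, (restVert_zero hW).symm⟩

end Segment

section Deletion

variable {V : Type*} [DecidableEq V] {G : SimpleGraph V} {o : V} {C : G.Walk o o} {p q : V}
  {W : G.Walk p q}

def IsBridgedAt (C : G.Walk o o) (W : G.Walk p q) (k : ℕ) : Prop :=
  ∃ K i j, i < k ∧ k < j ∧ j ≤ C.length - W.length ∧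
    isClasp C K (restVert C W i) ∧ isClasp C K (restVert C W j)

variable {v : V}

lemma reachIn_restVert (hC : C.IsCycle) (hW : IsClockwise C W) (hP : W.IsPath) {i j : ℕ}
    (hij : i ≤ j) (hj : j ≤ C.length - W.length)
    (hv : ∀ k, i ≤ k → k ≤ j → restVert C W k ≠ v) :
    (G.deleteEdges {e | e ∈ W.edges}).ReachIn (keptVerts W \ {v})
      (restVert C W i) (restVert C W j) :=
  .of_chain _ hij
    (fun k _ hk => deleteEdges_adj.mpr
      ⟨adj_cycleVert_succ hC _, restVert_edge_not_mem hC hW hP (by omega)⟩)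
    fun k hik hkj => ⟨restVert_mem_keptVerts hC hW hP (by omega), hv k hik hkj⟩

lemma reachIn_end_or_start_of_mem_support (hC : C.IsCycle) (hW : IsClockwise C W) (hP : W.IsPath)
    (hpos : 0 < W.length) {x : V} (hxC : x ∈ C.support) (hx : x ∈ keptVerts W \ {v}) :
    (G.deleteEdges {e | e ∈ W.edges}).ReachIn (keptVerts W \ {v}) x q ∨
      (G.deleteEdges {e | e ∈ W.edges}).ReachIn (keptVerts W \ {v}) x p := by
  obtain ⟨k, hk, rfl⟩ := exists_eq_restVert hC hW hP hxC hx.1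
  by_cases h : ∀ i ≤ k, restVert C W i ≠ v
  · have := (reachIn_restVert hC hW hP (Nat.zero_le k) hk fun i _ hi => h i hi).symm
    rw [restVert_zero hW] at this
    exact .inl this
  · push Not at h
    obtain ⟨kv, hkv, rfl⟩ := h
    have := reachIn_restVert (v := restVert C W kv) hC hW hP hk le_rfl
      fun i hki hi heq => hx.2 <| by
      rw [show k = kv by have := restVert_injOn hC hW hP hpos (by omega) (by omega) heq; omega]
      rfl
    rw [restVert_length_sub hC hW hP] at this
    exact .inr this

lemma reachIn_end_or_start (hG : Graph2Conn G) (hC : C.IsCycle) (hW : IsClockwise C W)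
    (hP : W.IsPath) (hpq : p ≠ q) (hkept : ∀ z, isAnchor C z → z ∈ keptVerts W) {x : V}
    (hx : x ∈ keptVerts W \ {v}) :
    (G.deleteEdges {e | e ∈ W.edges}).ReachIn (keptVerts W \ {v}) x q ∨
      (G.deleteEdges {e | e ∈ W.edges}).ReachIn (keptVerts W \ {v}) x p := by
  have hpos : 0 < W.length := Walk.not_nil_iff_lt_length.mp (Walk.not_nil_of_ne hpq)
  by_cases hxC : x ∈ C.support
  · exact reachIn_end_or_start_of_mem_support hC hW hP hpos hxC hx
  obtain ⟨w, hwC, hwv⟩ : ∃ w ∈ C.support, w ≠ v := by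
    by_cases hq : q = v
    · exact ⟨p, hW.support_subset W.start_mem_support, fun hp => hpq (hp.trans hq.symm)⟩
    · exact ⟨q, hW.support_subset W.end_mem_support, hq⟩
  obtain ⟨U, hU⟩ := hG.exists_walk_avoiding hx.2 hwv
  obtain ⟨z, hz, hxz⟩ := exists_isClasp_reachIn (T := keptVerts W \ {v})
    hW.edge_endpoints_mem_support U hxC hwC fun u hu h =>
      ⟨h.elim (fun h => .inl fun huW => h (hW.support_subset huW)) (hkept u),
        fun huv => hU (huv ▸ hu)⟩
  rcases reachIn_end_or_start_of_mem_support hC hW hP hpos hz.1 hxz.right_mem with h | h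
  exacts [.inl (hxz.trans h), .inr (hxz.trans h)]

lemma reachIn_end_start (hC : C.IsCycle) (hW : IsClockwise C W) (hP : W.IsPath)
    (hpos : 0 < W.length) (hbr : ∀ k, 0 < k → k < C.length - W.length → IsBridgedAt C W k)
    (hq : q ≠ v) (hp : p ≠ v) :
    (G.deleteEdges {e | e ∈ W.edges}).ReachIn (keptVerts W \ {v}) q p := by
  rw [← restVert_zero hW] at hq
  rw [← restVert_length_sub hC hW hP] at hp
  suffices (G.deleteEdges {e | e ∈ W.edges}).ReachIn (keptVerts W \ {v}) (restVert C W 0)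
      (restVert C W (C.length - W.length)) by
    rwa [restVert_zero hW, restVert_length_sub hC hW hP] at this
  by_cases h : ∀ k ≤ C.length - W.length, restVert C W k ≠ v
  · exact reachIn_restVert hC hW hP (Nat.zero_le _) le_rfl fun k _ hk => h k hk
  push Not at h
  obtain ⟨kv, hkv, rfl⟩ := h
  have hne : ∀ k ≤ C.length - W.length, k ≠ kv → restVert C W k ≠ restVert C W kv :=
    fun k hk hne heq => hne (restVert_injOn hC hW hP hpos hk hkv heq)
  have h0 : 0 < kv := Nat.pos_of_ne_zero fun h => hq (by rw [h])
  have hm : kv < C.length - W.length := lt_of_le_of_ne hkv fun h => hp (by rw [h])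
  obtain ⟨K, i, j, hi, hj, hjm, hKi, hKj⟩ := hbr kv h0 hm
  have hT : ∀ u, u ∉ C.support → u ∈ keptVerts W \ {restVert C W kv} := fun u hu =>
    ⟨.inl fun h => hu (hW.support_subset h), fun h => hu (by
      rw [Set.mem_singleton_iff.mp h]; exact cycleVert_mem_support _)⟩
  have hmem : ∀ k ≤ C.length - W.length, k ≠ kv →
      restVert C W k ∈ keptVerts W \ {restVert C W kv} :=
    fun k hk hkv => ⟨restVert_mem_keptVerts hC hW hP hk, hne k hk hkv⟩
  refine ((reachIn_restVert hC hW hP (Nat.zero_le i) (by omega) fun k _ hk =>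
    hne k (by omega) (by omega)).trans ?_).trans
    (reachIn_restVert hC hW hP hjm le_rfl fun k hk _ => hne k (by omega) (by omega))
  exact reachIn_of_isClasp hW.edge_endpoints_mem_support hT hKi hKj (hmem i (by omega) (by omega))
    (hmem j hjm (by omega))

theorem graph2Conn_of_isClockwise (hG : Graph2Conn G) (hC : C.IsCycle)
    (hout : (cycOutside C).Nonempty) (hW : IsClockwise C W) (hP : W.IsPath) (hpq : p ≠ q)
    (hkept : ∀ z, isAnchor C z → z ∈ keptVerts W)
    (hbr : ∀ k, 0 < k → k < C.length - W.length → IsBridgedAt C W k) :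
    Graph2Conn ((G.deleteEdges {e | e ∈ W.edges}).induce (keptVerts W)) := by
  have hpos : 0 < W.length := Walk.not_nil_iff_lt_length.mp (Walk.not_nil_of_ne hpq)
  refine ⟨?_, fun v => connected_induce_induce_ne ?_⟩
  · obtain ⟨y, hy⟩ := hout
    have : Finite V := Nat.finite_of_card_ne_zero (by have := hG.1; omega)
    have hyp : y ≠ p := fun h => hy (h ▸ hW.support_subset W.start_mem_support)
    have hyq : y ≠ q := fun h => hy (h ▸ hW.support_subset W.end_mem_support)
    exact three_le_natCard (a := (⟨p, .inr (.inl rfl)⟩ : keptVerts W))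
      (b := ⟨q, .inr (.inr rfl)⟩) (c := ⟨y, .inl fun h => hy (hW.support_subset h)⟩)
      (fun h => hpq (congrArg Subtype.val h)) (fun h => hyp (congrArg Subtype.val h).symm)
      (fun h => hyq (congrArg Subtype.val h).symm)
  · refine induce_connected_of_reachIn_hubs (a := q) (b := p)
      (fun hq hp => reachIn_end_start hC hW hP hpos hbr hq.2 hp.2)
      (fun x hx => reachIn_end_or_start hG hC hW hP hpq hkept hx) ?_
    by_cases hq : q = v
    · exact .inr ⟨.inr (.inl rfl), fun hp => hpq (hp.trans hq.symm)⟩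
    · exact .inl ⟨.inr (.inr rfl), hq⟩

end Deletion

section Minimality

variable {V : Type*} [DecidableEq V] {G : SimpleGraph V} {o : V} {C : G.Walk o o} {p q : V}
  {W : G.Walk p q}

lemma isClasp_restVert (hC : C.IsCycle) {K : (earGraph C).ConnectedComponent} {X : V}
    (hX : isClasp C K X) {i : ℕ}
    (hi : cidx C p + W.length + i = cidx C X ∨ cidx C p + W.length + i = cidx C X + C.length) :
    isClasp C K (restVert C W i) := by
  rcases hi with hi | hi
  · rwa [restVert, hi, cycleVert_cidx hC hX.1]
  · rwa [restVert, hi, cycleVert_add_length, cycleVert_cidx hC hX.1]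

lemma isBridgedAt_of_isClasp (hC : C.IsCycle) {K : (earGraph C).ConnectedComponent} {X Y : V}
    (hX : isClasp C K X) (hY : isClasp C K Y) {i j k : ℕ}
    (hi : cidx C p + W.length + i = cidx C X ∨ cidx C p + W.length + i = cidx C X + C.length)
    (hj : cidx C p + W.length + j = cidx C Y ∨ cidx C p + W.length + j = cidx C Y + C.length)
    (hik : i < k) (hkj : k < j) (hjm : j ≤ C.length - W.length) : IsBridgedAt C W k :=
  ⟨K, i, j, hik, hkj, hjm, isClasp_restVert hC hX hi, isClasp_restVert hC hY hj⟩

lemma isClasp_ends_of_wrap (hC : C.IsCycle) (hW : IsClockwise C W) (hP : W.IsPath)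
    {H : (earGraph C).ConnectedComponent} (hH : ∃ z, isClasp C H z)
    (hintA : ∀ x ∈ W.support, x ≠ p → x ≠ q → ¬ isAnchor C x)
    (harc : ∀ x ∈ W.support, firstClasp C H ≤ cidx C x ∧ cidx C x ≤ lastClasp C H)
    (hwrap : C.length ≤ cidx C p + W.length) : isClasp C H q ∧ isClasp C H p := by
  have := hW.length_lt hC hP
  have := cidx_lt hC (hW.support_subset W.start_mem_support)
  have := hC.three_le_length
  have hb := lastClasp_lt hC hH
  obtain ⟨A, hA, hAi⟩ := exists_cidx_eq_firstClasp hH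
  obtain ⟨B, hB, hBi⟩ := exists_cidx_eq_lastClasp hC hH
  have ha := (harc _ (hW.cycleVert_mem_support (j := C.length - cidx C p) (by omega))).1
  rw [cidx_cycleVert hC, show cidx C p + (C.length - cidx C p) = C.length by omega,
    Nat.mod_self] at ha
  have hb' := (harc _ (hW.cycleVert_mem_support (j := C.length - 1 - cidx C p) (by omega))).2
  rw [cidx_cycleVert hC, Nat.mod_eq_of_lt (by omega)] at hb'
  have hpq : ∀ x ∈ W.support, isAnchor C x → x = p ∨ x = q := fun x hx hxA => by
    by_contra h
    push Not at h
    exact hintA x hx h.1 h.2 hxA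
  rcases hpq A (hW.mem_support_of_cidx hC hP hA.1 (j := C.length - cidx C p) (by omega)
    (by omega)) ⟨H, hA⟩ with rfl | rfl
  · omega
  rcases hpq B (hW.mem_support_of_cidx hC hP hB.1 (j := C.length - 1 - cidx C p) (by omega)
    (by omega)) ⟨H, hB⟩ with rfl | rfl
  · exact ⟨hA, hB⟩
  · omega

lemma isBridgedAt_of_isAnchor_end (hC : C.IsCycle) (hcl : ∀ K, ∃ z, isClasp C K z)
    {H : (earGraph C).ConnectedComponent}
    (hmin : ∀ K, arcLen C H ≤ arcLen C K) (hqA : isAnchor C q)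
    (harc : ∀ x ∈ W.support, firstClasp C H ≤ cidx C x ∧ cidx C x ≤ lastClasp C H)
    (hq : cidx C q = cidx C p + W.length) {k : ℕ} (hk0 : 0 < k)
    (hk : k ≤ lastClasp C H - cidx C q) : IsBridgedAt C W k := by
  have := harc p W.start_mem_support
  have := harc q W.end_mem_support
  have := lastClasp_lt hC (hcl H)
  obtain ⟨K, hK⟩ := hqA
  have := firstClasp_le hK
  have := lastClasp_lt hC (hcl K)
  have := hmin K
  unfold arcLen at this
  obtain ⟨X, hX, hXi⟩ := exists_cidx_eq_lastClasp hC (hcl K)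
  obtain ⟨Y, hY, hYi⟩ := exists_cidx_eq_firstClasp (hcl K)
  rcases lt_or_ge (lastClasp C H) (lastClasp C K) with h | h
  · exact isBridgedAt_of_isClasp hC hK hX (i := 0) (j := lastClasp C K - cidx C q)
      (by omega) (by omega) (by omega) (by omega) (by omega)
  · exact isBridgedAt_of_isClasp hC hK hY (i := 0) (j := firstClasp C K + C.length - cidx C q)
      (by omega) (by omega) (by omega) (by omega) (by omega)

lemma isBridgedAt_of_isAnchor_start (hC : C.IsCycle) (hW : IsClockwise C W) (hP : W.IsPath)
    (hcl : ∀ K, ∃ z, isClasp C K z) {H : (earGraph C).ConnectedComponent}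
    (hmin : ∀ K, arcLen C H ≤ arcLen C K) (hpA : isAnchor C p)
    (harc : ∀ x ∈ W.support, firstClasp C H ≤ cidx C x ∧ cidx C x ≤ lastClasp C H)
    (hq : cidx C q = cidx C p + W.length) {k : ℕ}
    (hk0 : firstClasp C H + C.length - cidx C q ≤ k) (hk : k < C.length - W.length) :
    IsBridgedAt C W k := by
  have := harc p W.start_mem_support
  have := harc q W.end_mem_support
  have := lastClasp_lt hC (hcl H)
  have := hW.length_lt hC hP
  obtain ⟨K, hK⟩ := hpA
  have := le_lastClasp hC hK
  have := lastClasp_lt hC (hcl K)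
  have := hmin K
  unfold arcLen at this
  obtain ⟨X, hX, hXi⟩ := exists_cidx_eq_lastClasp hC (hcl K)
  obtain ⟨Y, hY, hYi⟩ := exists_cidx_eq_firstClasp (hcl K)
  rcases lt_or_ge (firstClasp C K) (firstClasp C H) with h | h
  · exact isBridgedAt_of_isClasp hC hY hK (i := firstClasp C K + C.length - cidx C q)
      (j := C.length - W.length) (by omega) (by omega) (by omega) (by omega) (by omega)
  · exact isBridgedAt_of_isClasp hC hX hK (i := lastClasp C K - cidx C q)
      (j := C.length - W.length) (by omega) (by omega) (by omega) (by omega) (by omega)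

lemma isBridgedAt_of_lt (hC : C.IsCycle) (hW : IsClockwise C W) (hP : W.IsPath)
    (hcl : ∀ K, ∃ z, isClasp C K z) {H : (earGraph C).ConnectedComponent}
    (hmin : ∀ K, arcLen C H ≤ arcLen C K) (hpA : isAnchor C p) (hqA : isAnchor C q)
    (harc : ∀ x ∈ W.support, firstClasp C H ≤ cidx C x ∧ cidx C x ≤ lastClasp C H)
    (hlt : cidx C p + W.length < C.length) {k : ℕ} (hk0 : 0 < k)
    (hk : k < C.length - W.length) : IsBridgedAt C W k := by
  have hq := (hW.cidx_end hC hP).resolve_right (by omega)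
  rcases le_or_gt k (lastClasp C H - cidx C q) with h₁ | h₁
  · exact isBridgedAt_of_isAnchor_end hC hcl hmin hqA harc hq hk0 h₁
  rcases le_or_gt (firstClasp C H + C.length - cidx C q) k with h₂ | h₂
  · exact isBridgedAt_of_isAnchor_start hC hW hP hcl hmin hpA harc hq h₂ hk
  have := harc p W.start_mem_support
  have := harc q W.end_mem_support
  have := lastClasp_lt hC (hcl H)
  have := hW.length_lt hC hP
  obtain ⟨A, hA, hAi⟩ := exists_cidx_eq_firstClasp (hcl H)
  obtain ⟨B, hB, hBi⟩ := exists_cidx_eq_lastClasp hC (hcl H)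
  exact isBridgedAt_of_isClasp hC hB hA (i := lastClasp C H - cidx C q)
    (j := firstClasp C H + C.length - cidx C q)
    (by omega) (by omega) (by omega) (by omega) (by omega)

lemma isBridgedAt_of_minimal (hG : Graph2Conn G) (hC : C.IsCycle) (hW : IsClockwise C W)
    (hP : W.IsPath) {H : (earGraph C).ConnectedComponent} (hmin : ∀ K, arcLen C H ≤ arcLen C K)
    (hpA : isAnchor C p) (hqA : isAnchor C q)
    (hintA : ∀ x ∈ W.support, x ≠ p → x ≠ q → ¬ isAnchor C x)
    (harc : ∀ x ∈ W.support, firstClasp C H ≤ cidx C x ∧ cidx C x ≤ lastClasp C H) :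
    ∀ k, 0 < k → k < C.length - W.length → IsBridgedAt C W k := by
  intro k hk0 hk
  have hcl := exists_isClasp hG hC
  rcases lt_or_ge (cidx C p + W.length) C.length with hlt | hwrap
  · exact isBridgedAt_of_lt hC hW hP hcl hmin hpA hqA harc hlt hk0 hk
  obtain ⟨hq, hp⟩ := isClasp_ends_of_wrap hC hW hP (hcl H) hintA harc hwrap
  have := hW.cidx_end hC hP
  have := hW.length_lt hC hP
  exact isBridgedAt_of_isClasp hC hq hp (i := 0) (j := C.length - W.length) (by omega)
    (.inr (by omega)) hk0 hk le_rfl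

theorem graph2Conn_of_isClockwise_of_minimal (hG : Graph2Conn G) (hC : C.IsCycle)
    (hout : (cycOutside C).Nonempty) {H : (earGraph C).ConnectedComponent}
    (hmin : ∀ K, arcLen C H ≤ arcLen C K) (hpq : p ≠ q) (hW : IsClockwise C W) (hP : W.IsPath)
    (hpA : isAnchor C p) (hqA : isAnchor C q)
    (hintA : ∀ x ∈ W.support, x ≠ p → x ≠ q → ¬ isAnchor C x)
    (harc : ∀ x ∈ W.support, firstClasp C H ≤ cidx C x ∧ cidx C x ≤ lastClasp C H) :
    Graph2Conn ((G.deleteEdges {e | e ∈ W.edges}).induce (keptVerts W)) :=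
  graph2Conn_of_isClockwise hG hC hout hW hP hpq (fun _ => keptVerts_of_isAnchor hintA)
    (isBridgedAt_of_minimal hG hC hW hP hmin hpA hqA hintA harc)

end Minimality

theorem segments_in_minimum_arc_are_safe
    {V : Type*} [DecidableEq V] {G : SimpleGraph V} (hG : Graph2Conn G)
    {o : V} (C : G.Walk o o) (hC : C.IsCycle)
    (hout : (cycOutside C).Nonempty)
    (H : (earGraph C).ConnectedComponent)
    -- H is an earring of minimum arc length
    (hmin : ∀ K, arcLen C H ≤ arcLen C K)
    -- Sg is a segment contained in the arc of H
    {p q : V} (hpq : p ≠ q) (Sg : G.Walk p q) (hSgP : Sg.IsPath)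
    (hsub : ∀ e ∈ Sg.edges, e ∈ C.edges)
    (hpA : isAnchor C p) (hqA : isAnchor C q)
    (hintA : ∀ x ∈ Sg.support, x ≠ p → x ≠ q → ¬ isAnchor C x)
    (harc : ∀ x ∈ Sg.support,
      firstClasp C H ≤ cidx C x ∧ cidx C x ≤ lastClasp C H) :
    Graph2Conn ((G.deleteEdges {e | e ∈ Sg.edges}).induce
      {x | x ∉ Sg.support ∨ x = p ∨ x = q}) := by
  have hpos : 0 < Sg.length := Walk.not_nil_iff_lt_length.mp (Walk.not_nil_of_ne hpq)
  rcases isClockwise_or_isClockwise_reverse hC hSgP hsub hpos with hcw | hcw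
  · exact graph2Conn_of_isClockwise_of_minimal hG hC hout hmin hpq hcw hSgP hpA hqA hintA harc
  have := graph2Conn_of_isClockwise_of_minimal hG hC hout hmin hpq.symm hcw hSgP.reverse hqA hpA
    (fun x hx hq hp => hintA x (by simpa using hx) hp hq) (fun x hx => harc x (by simpa using hx))
  rw [keptVerts_reverse, show {e | e ∈ Sg.reverse.edges} = {e | e ∈ Sg.edges} by simp] at this
  exact this
end

section
/- Let C be a cycle decomposed into consecutive vertex-disjoint clusters X_1, …, X_q (in cyclic order along C), each cluster having weight w_j ≤ k, with Σ_j w_j ≥ 2k, and suppose the total cost of the edges of C plus the costs of all clusters is at most δ·Σ_j w_j. Then there is a consecutive segment of clusters X_a, X_{a+1}, …, X_b whose total weight is between k and 2k, and such that the cost of these clusters plus the cost of the edges of C connecting them is at most 2δk. -/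
/-!
Let `len a` be the least number of clusters, starting from cluster `a`, whose weight reaches `k`;
since every weight is at most `k`, the segment of length `len a` has weight in `[k, 2k]`.
Average the costs of these segments with weight `w a` on the start `a`: a cluster or arc at
position `j` lies in the segment of start `a` only if the clusters from `a` up to `j` (excluded)
weigh less than `k`, so the starts covering `j` weigh at most `k + w j ≤ 2k` in total. Hence the
weighted average of the segment costs is at most `2k · δW / W = 2δk`, and some segment is at
most average.
-/

open Finset Function

lemma Function.Periodic.sum_range_add_period {M : Type*} [AddCancelCommMonoid M] {w : ℕ → M}
    {q : ℕ} (hw : Periodic w q) (a : ℕ) :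
    ∑ t ∈ range q, w (a + t) = ∑ t ∈ range q, w t := by
  induction a with
  | zero => simp
  | succ a ih =>
    have h := (sum_range_succ (fun t => w (a + t)) q).symm.trans (sum_range_succ' _ q)
    rw [hw, add_zero] at h
    rw [← ih, add_right_cancel h]
    exact sum_congr rfl fun t _ => by rw [add_right_comm, add_assoc]

lemma exists_minimal_segment {w : ℕ → ℝ} {k : ℝ} (hk : 0 < k) (hwk : ∀ i, w i ≤ k)
    {a N : ℕ} (hN : k ≤ ∑ t ∈ range N, w (a + t)) :
    ∃ n, 1 ≤ n ∧ n ≤ N ∧ k ≤ ∑ t ∈ range n, w (a + t) ∧ ∑ t ∈ range n, w (a + t) ≤ 2 * k ∧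
      ∀ m < n, ∑ t ∈ range m, w (a + t) < k := by
  have hex : ∃ n, k ≤ ∑ t ∈ range n, w (a + t) := ⟨N, hN⟩
  have hbelow : ∀ m < Nat.find hex, ∑ t ∈ range m, w (a + t) < k :=
    fun m hm => not_le.1 (Nat.find_min hex hm)
  have hpos : 1 ≤ Nat.find hex :=
    Nat.one_le_iff_ne_zero.2 fun h0 => by simpa [h0] using (Nat.find_spec hex).trans_lt' hk
  obtain ⟨n, hn⟩ : ∃ n, Nat.find hex = n + 1 := ⟨_, (Nat.sub_add_cancel hpos).symm⟩
  refine ⟨_, hpos, Nat.find_min' hex hN, Nat.find_spec hex, ?_, hbelow⟩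
  have hlast := hbelow n (by omega)
  rw [hn, sum_range_succ]
  linarith [hwk (a + n)]

lemma sum_le_of_forall_segment_sum_lt {w : ℕ → ℝ} (hw0 : ∀ i, 0 ≤ w i) {k : ℝ} (hk : 0 ≤ k)
    {T : Finset ℕ} {m : ℕ} (hT : ∀ b ∈ T, b ≤ m ∧ ∑ t ∈ range (m - b), w (b + t) < k) :
    ∑ b ∈ T, w b ≤ k + w m := by
  rcases T.eq_empty_or_nonempty with rfl | hne
  · simpa using add_nonneg hk (hw0 m)
  obtain ⟨hb₀m, hb₀⟩ := hT _ (T.min'_mem hne)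
  calc ∑ b ∈ T, w b ≤ ∑ b ∈ Icc (T.min' hne) m, w b :=
        sum_le_sum_of_subset_of_nonneg
          (fun b hb => mem_Icc.2 ⟨T.min'_le b hb, (hT b hb).1⟩) fun i _ _ => hw0 i
    _ = ∑ t ∈ range (m - T.min' hne), w (T.min' hne + t) + w m := by
        rw [← Ico_insert_right hb₀m, sum_insert right_notMem_Ico, sum_Ico_eq_sum_range, add_comm]
    _ ≤ k + w m := by linarith

section Covering

variable {q : ℕ} {k : ℝ} {w : ℕ → ℝ} {len : ℕ → ℕ}

lemma sum_cover_weight_add_le (hwp : Periodic w q) (hw0 : ∀ i, 0 ≤ w i) (hwk : ∀ i, w i ≤ k)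
    (hlen : ∀ a n, n < len a → ∑ t ∈ range n, w (a + t) < k) (j : ℕ) :
    ∑ a ∈ range q with a ≤ j ∧ j < a + len a, w a +
      ∑ a ∈ range q with a ≤ q + j ∧ q + j < a + len a, w a ≤ 2 * k := by
  set A₁ := {a ∈ range q | a ≤ j ∧ j < a + len a}
  set A₂ := {a ∈ range q | a ≤ q + j ∧ q + j < a + len a}
  -- shifting the starts covering `j` by a period makes them cover `q + j`, like those of `A₂`
  have hshift : ∑ a ∈ A₁, w a = ∑ b ∈ A₁.map (addRightEmbedding q), w b := by
    simp [hwp _]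
  have hdisj : Disjoint (A₁.map (addRightEmbedding q)) A₂ := by
    simp only [disjoint_left, mem_map, addRightEmbedding_apply]
    rintro _ ⟨a, -, rfl⟩ hb
    simp [A₂] at hb
  rw [hshift, ← sum_union hdisj]
  refine (sum_le_of_forall_segment_sum_lt hw0 ((hw0 0).trans (hwk 0)) ?_).trans
    (by linarith [hwk (q + j)])
  simp only [mem_union, mem_map, addRightEmbedding_apply]
  rintro b (⟨a, ha, rfl⟩ | hb)
  · obtain ⟨-, haj, hja⟩ := mem_filter.1 ha
    refine ⟨by omega, ?_⟩
    rw [show q + j - (a + q) = j - a by omega]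
    simpa only [add_right_comm a q, hwp _] using hlen a (j - a) (by omega)
  · obtain ⟨-, hbj, hjb⟩ := mem_filter.1 hb
    exact ⟨hbj, hlen b _ (by omega)⟩

lemma sum_mul_segment_sum_eq (c : ℕ → ℝ) {s : Finset ℕ} {N : ℕ}
    (hN : ∀ a ∈ s, a + len a ≤ N) :
    ∑ a ∈ s, w a * ∑ t ∈ range (len a), c (a + t) =
      ∑ j ∈ range N, c j * ∑ a ∈ s with a ≤ j ∧ j < a + len a, w a := by
  have hseg : ∀ a ∈ s, ∑ t ∈ range (len a), c (a + t) =
      ∑ j ∈ range N with a ≤ j ∧ j < a + len a, c j := by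
    intro a ha
    rw [← Nat.add_sub_cancel_left (n := a) (m := len a), ← sum_Ico_eq_sum_range]
    congr 1
    ext j
    simp only [mem_Ico, mem_filter, mem_range]
    have := hN a ha
    omega
  rw [sum_congr rfl fun a ha => by rw [hseg a ha]]
  simp_rw [sum_filter, mul_sum, mul_ite, mul_zero]
  rw [sum_comm]
  simp_rw [mul_comm]

lemma sum_mul_segment_sum_le (hwp : Periodic w q) (hw0 : ∀ i, 0 ≤ w i) (hwk : ∀ i, w i ≤ k)
    {c : ℕ → ℝ} (hcp : Periodic c q) (hc0 : ∀ i, 0 ≤ c i) (hlenq : ∀ a, len a ≤ q)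
    (hlen : ∀ a n, n < len a → ∑ t ∈ range n, w (a + t) < k) :
    ∑ a ∈ range q, w a * ∑ t ∈ range (len a), c (a + t) ≤ 2 * k * ∑ j ∈ range q, c j := by
  have hN : ∀ a ∈ range q, a + len a ≤ q + q := fun a ha => by
    have := hlenq a; have := mem_range.1 ha; omega
  rw [sum_mul_segment_sum_eq c hN, sum_range_add, ← sum_add_distrib, mul_sum]
  refine sum_le_sum fun j _ => ?_
  rw [add_comm q j, hcp, add_comm j q, ← mul_add, mul_comm _ (c j)]
  exact mul_le_mul_of_nonneg_left (sum_cover_weight_add_le hwp hw0 hwk hlen j) (hc0 j)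

end Covering

lemma Finset.exists_le_of_sum_mul_le {ι : Type*} {s : Finset ι} {w f : ι → ℝ} {B : ℝ}
    (hw0 : ∀ i ∈ s, 0 ≤ w i) (hpos : 0 < ∑ i ∈ s, w i)
    (h : ∑ i ∈ s, w i * f i ≤ (∑ i ∈ s, w i) * B) : ∃ i ∈ s, f i ≤ B := by
  by_contra! hlt
  obtain ⟨i, hi, hwi⟩ := exists_lt_of_sum_lt (f := fun _ => 0) (g := w) (by rwa [sum_const_zero])
  refine h.not_gt ?_
  rw [sum_mul]
  exact sum_lt_sum (fun j hj => mul_le_mul_of_nonneg_left (hlt j hj).le (hw0 j hj))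
    ⟨i, hi, mul_lt_mul_of_pos_left (hlt i hi) hwi⟩

theorem cycle_segment_of_good_density_general
    (q : ℕ) (k δ : ℝ) (hk : 0 < k)
    (w cc ac : ℕ → ℝ)
    (hper : ∀ j, w (j + q) = w j ∧ cc (j + q) = cc j ∧ ac (j + q) = ac j)
    (hw : ∀ j, 0 ≤ w j ∧ w j ≤ k) (hcc : ∀ j, 0 ≤ cc j) (hac : ∀ j, 0 ≤ ac j)
    (hW : 2 * k ≤ ∑ j ∈ Finset.range q, w j)
    (htot : ∑ j ∈ Finset.range q, (cc j + ac j) ≤ δ * ∑ j ∈ Finset.range q, w j) :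
    ∃ (a len : ℕ), 1 ≤ len ∧ len ≤ q ∧
      k ≤ ∑ t ∈ Finset.range len, w (a + t) ∧
      ∑ t ∈ Finset.range len, w (a + t) ≤ 2 * k ∧
      ∑ t ∈ Finset.range len, cc (a + t) +
        ∑ t ∈ Finset.range (len - 1), ac (a + t) ≤ 2 * δ * k := by
  have hwp : Periodic w q := fun j => (hper j).1
  have hw0 : ∀ j, 0 ≤ w j := fun j => (hw j).1
  have hwk : ∀ j, w j ≤ k := fun j => (hw j).2
  choose len hlen1 hlenq hreach hle hbelow using fun a =>
    exists_minimal_segment hk hwk (a := a) (N := q) (by rw [hwp.sum_range_add_period]; linarith)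
  have hcc2 := sum_mul_segment_sum_le hwp hw0 hwk (fun j => (hper j).2.1) hcc hlenq hbelow
  have hac2 := sum_mul_segment_sum_le hwp hw0 hwk (fun j => (hper j).2.2) hac hlenq hbelow
  have hcost : ∑ a ∈ range q, w a * (∑ t ∈ range (len a), cc (a + t) +
      ∑ t ∈ range (len a - 1), ac (a + t)) ≤ (∑ j ∈ range q, w j) * (2 * δ * k) :=
    calc _ ≤ ∑ a ∈ range q, (w a * ∑ t ∈ range (len a), cc (a + t) +
          w a * ∑ t ∈ range (len a), ac (a + t)) := by
          refine sum_le_sum fun a _ => ?_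
          rw [← mul_add]
          gcongr
          · exact hw0 a
          · exact fun i _ _ => hac _
          · exact Nat.sub_le _ _
      _ ≤ 2 * k * ∑ j ∈ range q, (cc j + ac j) := by
          rw [sum_add_distrib, sum_add_distrib, mul_add]
          exact add_le_add hcc2 hac2
      _ ≤ 2 * k * (δ * ∑ j ∈ range q, w j) := by gcongr
      _ = (∑ j ∈ range q, w j) * (2 * δ * k) := by ring
  obtain ⟨a, -, ha⟩ := exists_le_of_sum_mul_le (fun a _ => hw0 a) (by linarith) hcost
  exact ⟨a, len a, hlen1 a, hlenq a, hreach a, hle a, ha⟩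

/-- Clusters arranged cyclically are encoded by `q`-periodic functions on ℕ:
`w j` is the weight of cluster `j`, `cc j` its cost, and `ac j` the cost of the
arc of the cycle connecting cluster `j` to cluster `j+1`. -/
theorem cycle_segment_of_good_density
    (q : ℕ) (hq : 1 ≤ q) (k δ : ℝ) (hk : 0 < k) (hδ : 0 ≤ δ)
    (w cc ac : ℕ → ℝ)
    (hper : ∀ j, w (j + q) = w j ∧ cc (j + q) = cc j ∧ ac (j + q) = ac j)
    (hw : ∀ j, 0 ≤ w j ∧ w j ≤ k) (hcc : ∀ j, 0 ≤ cc j) (hac : ∀ j, 0 ≤ ac j)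
    (hW : 2 * k ≤ ∑ j ∈ Finset.range q, w j)
    (htot : ∑ j ∈ Finset.range q, (cc j + ac j) ≤ δ * ∑ j ∈ Finset.range q, w j) :
    ∃ (a len : ℕ), 1 ≤ len ∧ len ≤ q ∧
      k ≤ ∑ t ∈ Finset.range len, w (a + t) ∧
      ∑ t ∈ Finset.range len, w (a + t) ≤ 2 * k ∧
      ∑ t ∈ Finset.range len, cc (a + t) +
        ∑ t ∈ Finset.range (len - 1), ac (a + t) ≤ 2 * δ * k :=
  cycle_segment_of_good_density_general q k δ hk w cc ac hper hw hcc hac hW htot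
end

section
/- Let a_1, …, a_q be nonnegative reals each at most k, with Σ a_j ≥ 2k, arranged in cyclic order, and let b_1, …, b_q ≥ 0 with Σ b_j ≤ δ·Σ a_j. Then there exists a cyclically consecutive set of indices I such that k ≤ Σ_{j∈I} a_j ≤ 2k and Σ_{j∈I} b_j ≤ 2δk. -/
private lemma win_sum' (q : ℕ) (g : ℕ → ℝ) (hper : ∀ j, g (j + q) = g j) (s : ℕ) :
    ∑ t ∈ Finset.range q, g (s + t) = ∑ t ∈ Finset.range q, g t := by
  induction s with
  | zero => simp
  | succ s ih =>
    have h1 : ∑ t ∈ Finset.range q, g (s + 1 + t)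
        = ∑ t ∈ Finset.range q, (fun t => g (s + t)) (t + 1) := by
      refine Finset.sum_congr rfl fun t _ => ?_
      simp only []
      congr 1
      omega
    have h2 := Finset.sum_range_succ' (fun t => g (s + t)) q
    have h3 := Finset.sum_range_succ (fun t => g (s + t)) q
    have h4 : g (s + q) = g (s + 0) := by rw [hper s]; simp
    rw [h1]
    have : ∑ t ∈ Finset.range q, (fun t => g (s + t)) (t + 1)
        = ∑ t ∈ Finset.range q, g (s + t) := by
      have := h2.symm.trans h3
      simp only [] at this h4 ⊢
      linarith [this, h4]
    rw [this, ih]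

private lemma multi_sum' (q : ℕ) (g : ℕ → ℝ) (hper : ∀ j, g (j + q) = g j) (s n : ℕ) :
    ∑ t ∈ Finset.range (n * q), g (s + t) = n * ∑ t ∈ Finset.range q, g t := by
  induction n with
  | zero => simp
  | succ n ih =>
    have hsplit : (n + 1) * q = n * q + q := by ring
    rw [hsplit, Finset.sum_range_add, ih]
    have : ∑ t ∈ Finset.range q, g (s + (n * q + t))
        = ∑ t ∈ Finset.range q, g ((s + n * q) + t) := by
      refine Finset.sum_congr rfl fun t _ => ?_
      congr 1; omega
    rw [this, win_sum' q g hper (s + n * q)]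
    push_cast
    ring

private lemma iterate_le' (f : ℕ → ℕ) (hf : ∀ s, s ≤ f s) (m s : ℕ) : s ≤ f^[m] s := by
  induction m with
  | zero => simp
  | succ m ih =>
    rw [Function.iterate_succ_apply']
    exact le_trans ih (hf _)

private lemma tele_sum' (f : ℕ → ℕ) (hf : ∀ s, s ≤ f s) (g : ℕ → ℝ) (m s : ℕ) :
    ∑ t ∈ Finset.range (f^[m] s - s), g (s + t)
      = ∑ r ∈ Finset.range m,
          ∑ t ∈ Finset.range (f (f^[r] s) - f^[r] s), g (f^[r] s + t) := by
  induction m with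
  | zero => simp
  | succ m ih =>
    have hu : s ≤ f^[m] s := iterate_le' f hf m s
    have huf : f^[m] s ≤ f (f^[m] s) := hf _
    have hsplit : f^[m + 1] s - s = (f^[m] s - s) + (f (f^[m] s) - f^[m] s) := by
      rw [Function.iterate_succ_apply']
      omega
    rw [hsplit, Finset.sum_range_add, ih, Finset.sum_range_succ]
    congr 1
    refine Finset.sum_congr rfl fun t _ => ?_
    congr 1
    omega

/-- Cyclic sequences are encoded by `q`-periodic functions on ℕ; a cyclically
consecutive set of indices is `{a, a+1, …, a+len-1}` (mod `q`). -/
theorem cyclic_segment_selection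
    (q : ℕ) (hq : 1 ≤ q) (k δ : ℝ) (hk : 0 < k) (hδ : 0 ≤ δ)
    (a b : ℕ → ℝ)
    (hper : ∀ j, a (j + q) = a j ∧ b (j + q) = b j)
    (ha : ∀ j, 0 ≤ a j ∧ a j ≤ k) (hb : ∀ j, 0 ≤ b j)
    (hA : 2 * k ≤ ∑ j ∈ Finset.range q, a j)
    (hB : ∑ j ∈ Finset.range q, b j ≤ δ * ∑ j ∈ Finset.range q, a j) :
    ∃ (s len : ℕ), 1 ≤ len ∧ len ≤ q ∧
      k ≤ ∑ t ∈ Finset.range len, a (s + t) ∧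
      ∑ t ∈ Finset.range len, a (s + t) ≤ 2 * k ∧
      ∑ t ∈ Finset.range len, b (s + t) ≤ 2 * δ * k := by
  classical
  have hpera : ∀ j, a (j + q) = a j := fun j => (hper j).1
  have hperb : ∀ j, b (j + q) = b j := fun j => (hper j).2
  have haw : ∀ s, ∑ t ∈ Finset.range q, a (s + t) = ∑ j ∈ Finset.range q, a j :=
    fun s => win_sum' q a hpera s
  -- existence of minimal windows
  have hP : ∀ s : ℕ, ∃ l : ℕ, k ≤ ∑ t ∈ Finset.range (l + 1), a (s + t) := by
    intro s
    refine ⟨q - 1, ?_⟩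
    have hq1 : q - 1 + 1 = q := by omega
    rw [hq1, haw s]
    linarith
  set len : ℕ → ℕ := fun s => Nat.find (hP s) + 1 with hlen_def
  have hlen1 : ∀ s, 1 ≤ len s := fun s => by simp [hlen_def]
  have hlen_spec : ∀ s, k ≤ ∑ t ∈ Finset.range (len s), a (s + t) :=
    fun s => Nat.find_spec (hP s)
  have hlen_q : ∀ s, len s ≤ q := by
    intro s
    have hfind : Nat.find (hP s) ≤ q - 1 := by
      apply Nat.find_le
      have hq1 : q - 1 + 1 = q := by omega
      rw [hq1, haw s]
      linarith
    simp only [hlen_def]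
    omega
  have hpre : ∀ s, ∑ t ∈ Finset.range (Nat.find (hP s)), a (s + t) ≤ k := by
    intro s
    rcases Nat.eq_zero_or_pos (Nat.find (hP s)) with h0 | hpos
    · rw [h0]; simp; linarith
    · have hm := Nat.find_min (hP s) (m := Nat.find (hP s) - 1) (by omega)
      push_neg at hm
      have hq1 : Nat.find (hP s) - 1 + 1 = Nat.find (hP s) := by omega
      rw [hq1] at hm
      linarith
  have hblock2k : ∀ s, ∑ t ∈ Finset.range (len s), a (s + t) ≤ 2 * k := by
    intro s
    have h1 := hpre s
    have h2 : ∑ t ∈ Finset.range (len s), a (s + t)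
        = ∑ t ∈ Finset.range (Nat.find (hP s)), a (s + t) + a (s + Nat.find (hP s)) :=
      Finset.sum_range_succ _ _
    have h3 := (ha (s + Nat.find (hP s))).2
    linarith
  set f : ℕ → ℕ := fun s => s + len s with hf_def
  have hf_lt : ∀ s, s < f s := by
    intro s
    have := hlen1 s
    simp only [hf_def]
    omega
  have hf_le : ∀ s, s ≤ f s := fun s => (hf_lt s).le
  set S : ℕ → ℕ := fun r => f^[r] 0 with hS_def
  have hSmono : StrictMono S := by
    apply strictMono_nat_of_lt_succ
    intro n
    simp only [hS_def, Function.iterate_succ_apply']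
    exact hf_lt _
  -- pigeonhole
  obtain ⟨i, j, hij, hjq, hmod⟩ :
      ∃ i j, i < j ∧ j ≤ q ∧ S i % q = S j % q := by
    have hmap : ∀ r ∈ Finset.range (q + 1), S r % q ∈ Finset.range q := by
      intro r _
      exact Finset.mem_range.mpr (Nat.mod_lt _ (by omega))
    obtain ⟨r1, h1, r2, h2, hne, heq⟩ :=
      Finset.exists_ne_map_eq_of_card_lt_of_maps_to
        (by simpa using Nat.lt_succ_self q) hmap
    rcases lt_or_gt_of_ne hne with h | h
    · exact ⟨r1, r2, h, Nat.lt_succ_iff.mp (Finset.mem_range.mp h2), heq⟩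
    · exact ⟨r2, r1, h, Nat.lt_succ_iff.mp (Finset.mem_range.mp h1), heq.symm⟩
  have hlt : S i < S j := hSmono hij
  have hdvd : q ∣ S j - S i := (Nat.modEq_iff_dvd' hlt.le).mp hmod
  obtain ⟨n, hn⟩ := hdvd
  have hn1 : 1 ≤ n := by
    rcases Nat.eq_zero_or_pos n with h0 | h
    · rw [h0, Nat.mul_zero] at hn; omega
    · exact h
  set m : ℕ := j - i with hm_def
  have hm1 : 1 ≤ m := by omega
  have hSj : f^[m] (S i) = S j := by
    simp only [hS_def]
    rw [← Function.iterate_add_apply]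
    congr 1
    omega
  have hnq : S j - S i = n * q := by rw [hn, Nat.mul_comm]
  -- telescoping for a and b
  have hta := tele_sum' f hf_le a m (S i)
  have htb := tele_sum' f hf_le b m (S i)
  rw [hSj, hnq, multi_sum' q a hpera (S i) n] at hta
  rw [hSj, hnq, multi_sum' q b hperb (S i) n] at htb
  have hblock_len : ∀ u : ℕ, f u - u = len u := by
    intro u
    simp only [hf_def]
    omega
  simp only [hblock_len] at hta htb
  -- total a over blocks bounded by 2k per block
  have hblocks_a_le : (n : ℝ) * ∑ j ∈ Finset.range q, a j ≤ (m : ℝ) * (2 * k) := by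
    rw [hta]
    calc ∑ r ∈ Finset.range m, ∑ t ∈ Finset.range (len (f^[r] (S i))), a (f^[r] (S i) + t)
        ≤ ∑ _r ∈ Finset.range m, 2 * k :=
          Finset.sum_le_sum fun r _ => hblock2k _
      _ = (m : ℝ) * (2 * k) := by
          rw [Finset.sum_const, Finset.card_range, nsmul_eq_mul]
  -- find a good block
  have hgood : ∃ r ∈ Finset.range m,
      ∑ t ∈ Finset.range (len (f^[r] (S i))), b (f^[r] (S i) + t) ≤ 2 * δ * k := by
    by_contra hcon
    push_neg at hcon
    have hne : (Finset.range m).Nonempty := Finset.nonempty_range_iff.mpr (by omega)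
    have hsum_lt : ∑ _r ∈ Finset.range m, (2 * δ * k)
        < ∑ r ∈ Finset.range m, ∑ t ∈ Finset.range (len (f^[r] (S i))), b (f^[r] (S i) + t) :=
      Finset.sum_lt_sum_of_nonempty hne hcon
    rw [Finset.sum_const, Finset.card_range, nsmul_eq_mul] at hsum_lt
    rw [← htb] at hsum_lt
    have h1 : (n : ℝ) * ∑ j ∈ Finset.range q, b j
        ≤ δ * ((n : ℝ) * ∑ j ∈ Finset.range q, a j) := by
      have hn0 : (0 : ℝ) ≤ (n : ℝ) := Nat.cast_nonneg n
      nlinarith [hB]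
    have h2 : δ * ((n : ℝ) * ∑ j ∈ Finset.range q, a j) ≤ δ * ((m : ℝ) * (2 * k)) :=
      mul_le_mul_of_nonneg_left hblocks_a_le hδ
    nlinarith [hsum_lt, h1, h2]
  obtain ⟨r, _, hrB⟩ := hgood
  exact ⟨f^[r] (S i), len (f^[r] (S i)), hlen1 _, hlen_q _, hlen_spec _, hblock2k _, hrB⟩
end

section
/- Suppose vertices v and w of a graph Y' are each 2-vertex-connected to a root r in Y' (i.e., two internally vertex-disjoint paths to r exist), and a vertex z has two paths P_v (from z to v) and P_w (from z to w) in Y' that are vertex-disjoint except at z. Then z is 2-vertex-connected to r in Y': no single vertex x ≠ z, r separates z from r. -/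
open SimpleGraph

/-- `u` is 2-connected to `r` in `Y'`: deleting any single vertex other than
`u` and `r` leaves `u` and `r` in the same connected component. -/
def ConnTo2 {V : Type*} (Y' : SimpleGraph V) (u r : V) : Prop :=
  ∀ x : V, x ≠ u → x ≠ r →
    ∃ (hu : u ∈ {y | y ≠ x}) (hr : r ∈ {y | y ≠ x}),
      (Y'.induce {y | y ≠ x}).Reachable ⟨u, hu⟩ ⟨r, hr⟩

lemma reach_induce_of_walk {V : Type*} (G : SimpleGraph V) (s : Set V) :
    ∀ {a b : V} (p : G.Walk a b) (hp : ∀ y ∈ p.support, y ∈ s),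
      (G.induce s).Reachable ⟨a, hp a p.start_mem_support⟩ ⟨b, hp b p.end_mem_support⟩ := by
  intro a b p
  induction p with
  | nil => intro hp; rfl
  | cons h q ih =>
    intro hp
    have ha : _ ∈ s := hp _ (SimpleGraph.Walk.start_mem_support _)
    have hb : _ ∈ s := hp _ (List.mem_cons_of_mem _ q.start_mem_support)
    have hadj : (G.induce s).Adj ⟨_, ha⟩ ⟨_, hb⟩ := h
    refine hadj.reachable.trans ?_
    exact ih (fun y hy => hp y (by simp [hy]))

theorem two_connected_to_root_via_two_paths
    {V : Type*} (Y' : SimpleGraph V) (r v w z : V)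
    (hrv : r ≠ v) (hrw : r ≠ w) (hrz : r ≠ z) (hvw : v ≠ w) (hvz : v ≠ z) (hwz : w ≠ z)
    (hv : ConnTo2 Y' v r) (hw : ConnTo2 Y' w r)
    (Pv : Y'.Walk z v) (Pw : Y'.Walk z w)
    (hPv : Pv.IsPath) (hPw : Pw.IsPath)
    -- the two paths are vertex-disjoint except at z
    (hshare : ∀ x ∈ Pv.support, x ∈ Pw.support → x = z) :
    ConnTo2 Y' z r := by
  intro x hxz hxr
  refine ⟨hxz.symm, hxr.symm, ?_⟩
  by_cases hxv : x ∈ Pv.support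
  · -- x is not on Pw
    have hxw : x ∉ Pw.support := fun h => hxz (hshare x hxv h)
    have hxw' : x ≠ w := fun h => hxw (h ▸ Pw.end_mem_support)
    have h1 := reach_induce_of_walk Y' {y | y ≠ x} Pw
      (fun y hy hyx => hxw (hyx ▸ hy))
    obtain ⟨hu, hr', h2⟩ := hw x hxw' hxr
    exact h1.trans h2
  · have hxv' : x ≠ v := fun h => hxv (h ▸ Pv.end_mem_support)
    have h1 := reach_induce_of_walk Y' {y | y ≠ x} Pv
      (fun y hy hyx => hxv (hyx ▸ hy))
    obtain ⟨hu, hr', h2⟩ := hv x hxv' hxr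
    exact h1.trans h2
end
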